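/- Let K be a field, G = GL(2,K), H the subgroup of invertible diagonal matrices, Z the subgroup of invertible scalar matrices, and for δ ∈ G set St(δ) = H ∩ δ⁻¹Hδ. Then St(e) = St(w₀) = H, and St(δ) = Z for every δ in {u, ū, u·w₀, ū·w₀} ∪ {δ_b : b ∈ K^× ∖ {−1}}, where w₀ = [[0,−1],[1,0]], u = [[1,1],[0,1]], ū = [[1,0],[1,1]], and δ_b = [[1+b⁻¹,1],[1,1]]. -/

import Mathlib

open Matrix

/-- `g` is an invertible diagonal matrix, i.e. `g ∈ H`. -/
def IsDiagUnit {K : Type*} [Field K] (g : GL (Fin 2) K) : Prop :=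
  (g : Matrix (Fin 2) (Fin 2) K) 0 1 = 0 ∧ (g : Matrix (Fin 2) (Fin 2) K) 1 0 = 0

/-- `g` is an invertible scalar matrix, i.e. `g ∈ Z`. -/
def IsScalarUnit {K : Type*} [Field K] (g : GL (Fin 2) K) : Prop :=
  (g : Matrix (Fin 2) (Fin 2) K) 0 1 = 0 ∧ (g : Matrix (Fin 2) (Fin 2) K) 1 0 = 0 ∧
    (g : Matrix (Fin 2) (Fin 2) K) 0 0 = (g : Matrix (Fin 2) (Fin 2) K) 1 1

/-- `g ∈ St(δ) = H ∩ δ⁻¹ H δ`. -/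
def InStab {K : Type*} [Field K] (δ g : GL (Fin 2) K) : Prop :=
  IsDiagUnit g ∧ IsDiagUnit (δ * g * δ⁻¹)

/-! For `g ∈ H` with `h = δ g δ⁻¹ ∈ H`, the identity `h δ = δ g` says `h i i = g j j` whenever
`δ i j ≠ 0`. Each `δ` of the second list has a row with two nonzero entries, which forces
`g 0 0 = g 1 1`; conversely scalar matrices are central. For antidiagonal `δ` such as `w₀`, the
same identity read off at the diagonal positions shows `h ∈ H` whenever `g ∈ H`. -/

section

variable {K : Type*} [Field K]

local notation "M" => Matrix (Fin 2) (Fin 2) K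

lemma conj_mul_eq_mul (δ g : GL (Fin 2) K) :
    ((δ * g * δ⁻¹ : GL (Fin 2) K) : M) * δ = (δ : M) * g := by
  rw [← Units.val_mul, inv_mul_cancel_right, Units.val_mul]

lemma conj_apply_eq_of_apply_ne_zero {δ g : GL (Fin 2) K} (hst : InStab δ g) {i j : Fin 2}
    (hδ : (δ : M) i j ≠ 0) :
    ((δ * g * δ⁻¹ : GL (Fin 2) K) : M) i i = (g : M) j j := by
  have hij := congrFun (congrFun (conj_mul_eq_mul δ g) i) j
  obtain ⟨⟨hg₀₁, hg₁₀⟩, hh₀₁, hh₁₀⟩ := hst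
  simp only [mul_apply, Fin.sum_univ_two] at hij
  refine mul_right_cancel₀ hδ ?_
  fin_cases i <;> fin_cases j <;> simp_all [mul_comm]

lemma isScalarUnit_of_inStab {δ g : GL (Fin 2) K} (hst : InStab δ g) {i : Fin 2}
    (h₀ : (δ : M) i 0 ≠ 0) (h₁ : (δ : M) i 1 ≠ 0) : IsScalarUnit g :=
  ⟨hst.1.1, hst.1.2, (conj_apply_eq_of_apply_ne_zero hst h₀).symm.trans
    (conj_apply_eq_of_apply_ne_zero hst h₁)⟩

lemma IsScalarUnit.isDiagUnit {g : GL (Fin 2) K} (hg : IsScalarUnit g) : IsDiagUnit g :=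
  ⟨hg.1, hg.2.1⟩

lemma commute_of_isScalarUnit {g : GL (Fin 2) K} (hg : IsScalarUnit g) (δ : GL (Fin 2) K) :
    Commute δ g := by
  have hg_scalar : (g : M) = scalar (Fin 2) ((g : M) 0 0) := by
    ext i j
    fin_cases i <;> fin_cases j <;> simp [hg.1, hg.2.1, hg.2.2]
  refine Units.ext ?_
  rw [Units.val_mul, Units.val_mul, hg_scalar]
  exact (scalar_commute _ (Commute.all _) _).symm.eq

lemma inStab_of_isScalarUnit {g : GL (Fin 2) K} (hg : IsScalarUnit g) (δ : GL (Fin 2) K) :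
    InStab δ g := by
  refine ⟨hg.isDiagUnit, ?_⟩
  rw [(commute_of_isScalarUnit hg δ).eq, mul_inv_cancel_right]
  exact hg.isDiagUnit

lemma inStab_iff_isScalarUnit {δ g : GL (Fin 2) K} {i : Fin 2}
    (h₀ : (δ : M) i 0 ≠ 0) (h₁ : (δ : M) i 1 ≠ 0) : InStab δ g ↔ IsScalarUnit g :=
  ⟨fun hst => isScalarUnit_of_inStab hst h₀ h₁, fun hg => inStab_of_isScalarUnit hg δ⟩

lemma isDiagUnit_conj_of_antidiagonal {δ g : GL (Fin 2) K} (h₀₀ : (δ : M) 0 0 = 0)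
    (h₁₁ : (δ : M) 1 1 = 0) (hg : IsDiagUnit g) : IsDiagUnit (δ * g * δ⁻¹) := by
  have hdet : (δ : M).det ≠ 0 := ((isUnit_iff_isUnit_det _).mp δ.isUnit).ne_zero
  obtain ⟨h₀₁, h₁₀⟩ : (δ : M) 0 1 ≠ 0 ∧ (δ : M) 1 0 ≠ 0 := by
    simpa [det_fin_two, h₀₀, h₁₁] using hdet
  have e₀₀ := congrFun (congrFun (conj_mul_eq_mul δ g) 0) 0
  have e₁₁ := congrFun (congrFun (conj_mul_eq_mul δ g) 1) 1
  simp only [mul_apply, Fin.sum_univ_two, h₀₀, h₁₁, hg.1, hg.2] at e₀₀ e₁₁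
  exact ⟨by simpa [h₁₀] using e₀₀, by simpa [h₀₁] using e₁₁⟩

end

theorem stabilizers_of_double_coset_representatives (K : Type*) [Field K] :
    (∀ δ : GL (Fin 2) K,
      ((δ : Matrix (Fin 2) (Fin 2) K) = !![1, 0; 0, 1] ∨
        (δ : Matrix (Fin 2) (Fin 2) K) = !![0, -1; 1, 0]) →
      ∀ g : GL (Fin 2) K, InStab δ g ↔ IsDiagUnit g) ∧
    (∀ δ : GL (Fin 2) K,
      ((δ : Matrix (Fin 2) (Fin 2) K) ∈ ({!![1, 1; 0, 1], !![1, 0; 1, 1],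
          !![1, -1; 1, 0], !![0, -1; 1, -1]} : Set (Matrix (Fin 2) (Fin 2) K)) ∨
        (∃ b : K, b ≠ 0 ∧ b ≠ -1 ∧
          (δ : Matrix (Fin 2) (Fin 2) K) = !![1 + b⁻¹, 1; 1, 1])) →
      ∀ g : GL (Fin 2) K, InStab δ g ↔ IsScalarUnit g) := by
  refine ⟨fun δ hδ g => ⟨And.left, fun hg => ⟨hg, ?_⟩⟩, fun δ hδ g => ?_⟩
  · rcases hδ with hδ | hδ
    · rwa [show δ = 1 from Units.ext (hδ.trans one_fin_two.symm), one_mul, inv_one, mul_one]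
    · exact isDiagUnit_conj_of_antidiagonal (by simp [hδ]) (by simp [hδ]) hg
  · obtain ⟨i, h₀, h₁⟩ : ∃ i, (δ : Matrix (Fin 2) (Fin 2) K) i 0 ≠ 0 ∧
        (δ : Matrix (Fin 2) (Fin 2) K) i 1 ≠ 0 := by
      simp only [Set.mem_insert_iff, Set.mem_singleton_iff] at hδ
      rcases hδ with (hδ | hδ | hδ | hδ) | ⟨b, -, -, hδ⟩
      · exact ⟨0, by simp [hδ]⟩
      · exact ⟨1, by simp [hδ]⟩
      · exact ⟨0, by simp [hδ]⟩
      · exact ⟨1, by simp [hδ]⟩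
      · exact ⟨1, by simp [hδ]⟩
    exact inStab_iff_isScalarUnit h₀ h₁
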